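/- Let Γʷ(s,t) be a C¹ family of contour generators observed by a moving camera as in the context, satisfying the epipolar parametrization condition: for all (s,t) there is a scalar λ(s,t) with Γʷ_t(s,t) = λ(s,t)(Γʷ(s,t) − c(t)), where c(t) = −R(t)ᵀ𝑻(t) is the camera center. Then the image velocity at t = 0 is given by the same formula as for a fixed point, namely γ_t = Ω̂γ − ⟨e₃, Ω̂γ⟩γ + (1/ρ)(V − V_z γ); i.e., the first-order apparent motion of an occluding contour under epipolar parametrization is independent of the deformation Γʷ_t. -/

import Mathlib

open scoped RealInnerProductSpace

attribute [local instance] Matrix.frobeniusNormedAddCommGroup Matrix.frobeniusNormedSpace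

noncomputable section

/-- ℝ³ with the Euclidean inner product. -/
abbrev V3 : Type := EuclideanSpace ℝ (Fin 3)

/-- The third standard basis vector e₃ = (0,0,1). -/
def e3 : V3 := WithLp.toLp 2 (![0, 0, 1] : Fin 3 → ℝ)

/-- Matrix–vector multiplication, valued in ℝ³ with the Euclidean structure. -/
def mulV (A : Matrix (Fin 3) (Fin 3) ℝ) (v : V3) : V3 := WithLp.toLp 2 (A.mulVec v)

/-! At `t = 0` the camera frame is the world frame and the camera centre is the origin, so the
epipolar condition makes `Γʷ_t` a multiple of `Γ`: the contour generator slides along the lines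
of sight. The derivative of the central projection `Γ ↦ ⟨e₃, Γ⟩⁻¹ Γ` annihilates motion along the
line of sight, so only the rigid-motion part `Ω̂Γ + V` of `Γ_t` is seen, exactly as for a fixed
point. -/

def mulVL : Matrix (Fin 3) (Fin 3) ℝ →L[ℝ] V3 →L[ℝ] V3 :=
  LinearMap.toContinuousLinearMap
    (Matrix.toEuclideanCLM (𝕜 := ℝ) (n := Fin 3)).toAlgEquiv.toLinearMap

lemma mulVL_apply (A : Matrix (Fin 3) (Fin 3) ℝ) (v : V3) : mulVL A v = mulV A v := rfl

@[simp]
lemma mulV_one (v : V3) : mulV 1 v = v := by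
  rw [mulV, Matrix.one_mulVec]

@[simp]
lemma mulV_zero (A : Matrix (Fin 3) (Fin 3) ℝ) : mulV A 0 = 0 :=
  (mulVL A).map_zero

lemma HasDerivAt.mulV {A : ℝ → Matrix (Fin 3) (Fin 3) ℝ} {A' : Matrix (Fin 3) (Fin 3) ℝ}
    {x : ℝ → V3} {x' : V3} {t : ℝ} (hA : HasDerivAt A A' t) (hx : HasDerivAt x x' t) :
    HasDerivAt (fun τ => mulV (A τ) (x τ)) (mulV A' (x t) + mulV (A t) x') t :=
  (mulVL.hasFDerivAt.comp_hasDerivAt t hA).clm_apply hx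

section Perspective

variable {E : Type*} [NormedAddCommGroup E] [InnerProductSpace ℝ E]

/-- Velocity of the central projection `p ↦ ⟪e, p⟫⁻¹ • p` onto the plane `⟪e, ·⟫ = 1`
of a point at `p` moving with velocity `v`. -/
def perspectiveVelocity (e p v : E) : E :=
  ⟪e, p⟫⁻¹ • (v - ⟪e, v⟫ • (⟪e, p⟫⁻¹ • p))

lemma HasDerivAt.perspective {f : ℝ → E} {f' : E} {t : ℝ} (e : E) (hf : HasDerivAt f f' t)
    (hdepth : ⟪e, f t⟫ ≠ 0) :
    HasDerivAt (fun τ => ⟪e, f τ⟫⁻¹ • f τ) (perspectiveVelocity e (f t) f') t := by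
  have hinner : HasDerivAt (fun τ => ⟪e, f τ⟫) ⟪e, f'⟫ t := by
    simpa using (hasDerivAt_const t e).inner ℝ hf
  refine ((hinner.inv hdepth).smul hf).congr_deriv ?_
  simp only [perspectiveVelocity, Pi.inv_apply, smul_sub, smul_smul]
  match_scalars <;> field_simp

lemma perspectiveVelocity_add_smul_self {e p : E} (v : E) (a : ℝ) (hdepth : ⟪e, p⟫ ≠ 0) :
    perspectiveVelocity e p (v + a • p) = perspectiveVelocity e p v := by
  simp only [perspectiveVelocity, inner_add_right, real_inner_smul_right, add_mul,
    mul_inv_cancel_right₀ hdepth, add_smul, smul_smul]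
  module

lemma perspectiveVelocity_linear_add (L : E →L[ℝ] E) (e p V : E) :
    perspectiveVelocity e p (L p + V)
      = L (⟪e, p⟫⁻¹ • p) - ⟪e, L (⟪e, p⟫⁻¹ • p)⟫ • (⟪e, p⟫⁻¹ • p)
        + ⟪e, p⟫⁻¹ • (V - ⟪e, V⟫ • (⟪e, p⟫⁻¹ • p)) := by
  simp only [perspectiveVelocity, map_smul, inner_add_right, real_inner_smul_right, smul_sub,
    smul_add, smul_smul]
  module

end Perspective

theorem occluding_contour_image_velocity
    (R R' : ℝ → Matrix (Fin 3) (Fin 3) ℝ)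
    (Tr Tr' : ℝ → V3)
    (Γw Γwt : ℝ → ℝ → V3)
    (lam : ℝ → ℝ → ℝ)
    (Γ : ℝ → ℝ → V3) (ρ : ℝ → ℝ → ℝ)
    (γ γt : ℝ → ℝ → V3)
    -- camera motion: R(t) ∈ SO(3), C¹, with R(0) = I, 𝑻(0) = 0
    (hR' : ∀ t, HasDerivAt R (R' t) t)
    (hR0 : R 0 = 1)
    (hTr' : ∀ t, HasDerivAt Tr (Tr' t) t)
    (hTr0 : Tr 0 = 0)
    -- contour generator, C¹ in time
    (hΓwt : ∀ s t, HasDerivAt (fun τ => Γw s τ) (Γwt s t) t)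
    -- epipolar parametrization: Γʷ_t = λ(Γʷ − c), with camera center c = −Rᵀ𝑻
    (hepip : ∀ s t, Γwt s t
      = lam s t • (Γw s t - (-(mulV (R t).transpose (Tr t)))))
    -- camera coordinates, depth and image
    (hΓ : ∀ s t, Γ s t = mulV (R t) (Γw s t) + Tr t)
    (hρ : ∀ s t, ρ s t = ⟪e3, Γ s t⟫)
    (hρpos : ∀ s t, 0 < ρ s t)
    (hγ : ∀ s t, γ s t = (ρ s t)⁻¹ • Γ s t)
    -- image velocity
    (hγt : ∀ s t, HasDerivAt (fun τ => γ s τ) (γt s t) t) :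
    -- conclusion at t = 0, with Ω̂ = R′(0)R(0)ᵀ, V = 𝑻′(0), V_z = ⟨e₃,V⟩
    ∀ s,
      (let Ωh := R' 0 * (R 0).transpose
       let V := Tr' 0
       γt s 0 = mulV Ωh (γ s 0) - ⟪e3, mulV Ωh (γ s 0)⟫ • γ s 0
          + (ρ s 0)⁻¹ • (V - ⟪e3, V⟫ • γ s 0)) := by
  intro s
  simp only [hR0, Matrix.transpose_one, mul_one]
  have hdepth : ⟪e3, Γ s 0⟫ ≠ 0 := (hρ s 0 ▸ hρpos s 0).ne'
  have hworld : Γw s 0 = Γ s 0 := by simp [hΓ, hR0, hTr0]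
  have hcamera : HasDerivAt (fun τ => Γ s τ)
      (mulVL (R' 0) (Γ s 0) + Tr' 0 + lam s 0 • Γ s 0) 0 := by
    have h := ((hR' 0).mulV (hΓwt s 0)).add (hTr' 0)
    simp only [hepip, hR0, hTr0, mulV_one, mulV_zero, neg_zero, sub_zero, hworld] at h
    rw [show (fun τ => Γ s τ) = (fun τ => mulV (R τ) (Γw s τ)) + Tr from funext (hΓ s)]
    exact h.congr_deriv (by rw [mulVL_apply]; abel)
  have himage : HasDerivAt (fun τ => γ s τ)
      (perspectiveVelocity e3 (Γ s 0) (mulVL (R' 0) (Γ s 0) + Tr' 0 + lam s 0 • Γ s 0)) 0 := by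
    rw [show (fun τ => γ s τ) = fun τ => ⟪e3, Γ s τ⟫⁻¹ • Γ s τ from
      funext fun τ => by rw [hγ, hρ]]
    exact hcamera.perspective e3 hdepth
  rw [(hγt s 0).unique himage, perspectiveVelocity_add_smul_self _ _ hdepth,
    perspectiveVelocity_linear_add, hγ, hρ]
  simp only [mulVL_apply]
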